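/- arXiv:2508.04624 — 3 statements merged into one kernel-verified Lean document; each statement's English description precedes it below -/
import Mathlib

section
/- Let k be a field, s ≥ 0, and R = k[x_1, x_2, ...] the polynomial ring in countably many variables with the infinite symmetric group 𝔖 acting by permuting variables. Let 𝔥_s be the 𝔖-stable ideal generated by x_i^{s+1} for all i. Then 𝔥_s is 𝔖-prime: whenever f, g ∈ R satisfy f · σ(g) ∈ 𝔥_s for all σ ∈ 𝔖, either f ∈ 𝔥_s or g ∈ 𝔥_s. -/
open MvPolynomial

/-- The ideal `𝔥_s ⊂ k[x_1, x_2, …]` generated by the `(s+1)`-st powers of all variables,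
i.e. by the `𝔖`-orbit of `x_1^{s+1}`. -/
noncomputable def hIdeal (k : Type) [Field k] (s : ℕ) : Ideal (MvPolynomial ℕ k) :=
  Ideal.span (Set.range fun i : ℕ => (X i : MvPolynomial ℕ k) ^ (s + 1))

lemma mem_hIdeal_iff (k : Type) [Field k] (s : ℕ) (p : MvPolynomial ℕ k) :
    p ∈ hIdeal k s ↔ ∀ m ∈ p.support, ∃ i, s + 1 ≤ m i := by
  have hset : (Set.range fun i : ℕ => (X i : MvPolynomial ℕ k) ^ (s + 1)) =
      (fun d => monomial d (1 : k)) '' (Set.range fun i : ℕ => Finsupp.single i (s + 1)) := by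
    ext p
    simp [X_pow_eq_monomial]
  rw [hIdeal, hset, mem_ideal_span_monomial_image]
  refine forall₂_congr fun m hm => ?_
  constructor
  · rintro ⟨si, ⟨i, rfl⟩, hle⟩
    exact ⟨i, (Finsupp.single_le_iff.mp hle)⟩
  · rintro ⟨i, hi⟩
    exact ⟨Finsupp.single i (s + 1), ⟨i, rfl⟩, Finsupp.single_le_iff.mpr hi⟩

/-- The involution swapping `i ↔ i + N` for `i < N`. -/
def flipFun (N i : ℕ) : ℕ := if i < N then i + N else if i < 2 * N then i - N else i

lemma flipFun_invol (N i : ℕ) : flipFun N (flipFun N i) = i := by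
  unfold flipFun
  split_ifs <;> omega

def flipPerm (N : ℕ) : Equiv.Perm ℕ :=
  ⟨flipFun N, flipFun N, flipFun_invol N, flipFun_invol N⟩

lemma flipPerm_finite (N : ℕ) : {n : ℕ | flipPerm N n ≠ n}.Finite := by
  refine Set.Finite.subset (Set.finite_Iio (2 * N)) fun n hn => ?_
  simp only [Set.mem_setOf_eq, flipPerm, Equiv.coe_fn_mk] at hn
  by_contra hcon
  simp only [Set.mem_Iio, not_lt] at hcon
  apply hn
  unfold flipFun
  split_ifs <;> omega

/-- `𝔥_s` is `𝔖`-prime: if `f · σ(g) ∈ 𝔥_s` for every finitely supported permutation `σ`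
of the variables, then `f ∈ 𝔥_s` or `g ∈ 𝔥_s`. -/
theorem hIdeal_sPrime (k : Type) [Field k] (s : ℕ) (f g : MvPolynomial ℕ k)
    (h : ∀ σ : Equiv.Perm ℕ, {n : ℕ | σ n ≠ n}.Finite →
      f * rename (⇑σ) g ∈ hIdeal k s) :
    f ∈ hIdeal k s ∨ g ∈ hIdeal k s := by
  by_contra hc
  push_neg at hc
  obtain ⟨hf, hg⟩ := hc
  rw [mem_hIdeal_iff] at hf hg
  push_neg at hf hg
  obtain ⟨m, hm, hmle⟩ := hf
  obtain ⟨m', hm', hmle'⟩ := hg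
  -- bound on the variables of f and g
  set N : ℕ := (f.vars.sup id) ⊔ (g.vars.sup id) + 1 with hN
  have hfN : ∀ i ∈ f.vars, i < N := by
    intro i hi
    have := Finset.le_sup (f := id) hi
    simp only [id] at this
    omega
  have hgN : ∀ i ∈ g.vars, i < N := by
    intro i hi
    have := Finset.le_sup (f := id) hi
    simp only [id] at this
    omega
  -- variables of exponents of monomials in supports
  have hsupp : ∀ (p : MvPolynomial ℕ k) (a : ℕ →₀ ℕ), a ∈ p.support →
      (∀ i ∈ p.vars, i < N) → ∀ i, N ≤ i → a i = 0 := by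
    intro p a ha hp i hi
    by_contra hne
    have : i ∈ p.vars := (mem_vars i).mpr ⟨a, ha, Finsupp.mem_support_iff.mpr hne⟩
    exact absurd (hp i this) (by omega)
  have hmz : ∀ i, N ≤ i → m i = 0 := hsupp f m hm hfN
  have hmz' : ∀ i, N ≤ i → m' i = 0 := hsupp g m' hm' hgN
  set σ : Equiv.Perm ℕ := flipPerm N with hσ
  have hmem := h σ (flipPerm_finite N)
  rw [mem_hIdeal_iff] at hmem
  set d₂ : ℕ →₀ ℕ := Finsupp.mapDomain (⇑σ) m' with hd₂
  -- d₂ is supported on variables ≥ N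
  have hd₂small : ∀ i, i < N → d₂ i = 0 := by
    intro i hi
    rw [hd₂, show (⇑σ) = flipFun N from rfl]
    rw [Finsupp.mapDomain, Finsupp.sum_apply, Finsupp.sum]
    apply Finset.sum_eq_zero
    intro j hj
    have hjN : j < N := by
      by_contra hcon
      have := hmz' j (by omega)
      exact Finsupp.mem_support_iff.mp hj this
    have : flipFun N j ≠ i := by
      unfold flipFun; split_ifs <;> omega
    simp [Finsupp.single_apply, this]
  have hd₂val : ∀ i, N ≤ i → i < 2 * N → d₂ i = m' (i - N) := by
    intro i hi1 hi2
    have : i = σ (i - N) := by show i = flipFun N (i - N); unfold flipFun; split_ifs <;> omega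
    rw [hd₂]
    conv_lhs => rw [this]
    rw [Finsupp.mapDomain_apply σ.injective]
  have hd₂big : ∀ i, 2 * N ≤ i → d₂ i = 0 := by
    intro i hi
    have : i = σ i := by show i = flipFun N i; unfold flipFun; split_ifs <;> omega
    rw [hd₂]
    conv_lhs => rw [this]
    rw [Finsupp.mapDomain_apply σ.injective]
    exact hmz' i (by omega)
  set d : ℕ →₀ ℕ := m + d₂ with hd
  -- the coefficient of d in f * rename σ g is nonzero
  have hcoeff : coeff d (f * rename (⇑σ) g) = coeff m f * coeff m' g := by
    rw [coeff_mul]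
    rw [Finset.sum_eq_single (m, d₂)]
    · rw [← coeff_rename_mapDomain (⇑σ) (flipPerm N).injective g m']
    · rintro ⟨a, b⟩ hab hne
      rw [Finset.HasAntidiagonal.mem_antidiagonal] at hab
      by_contra hcon
      have ha : a ∈ f.support := by
        rw [mem_support_iff]
        intro h0
        exact hcon (by simp [h0])
      have hb : b ∈ (rename (⇑σ) g).support := by
        rw [mem_support_iff]
        intro h0
        exact hcon (by simp [h0])
      classical
      rw [support_rename_of_injective (flipPerm N).injective] at hb
      obtain ⟨b', hb', rfl⟩ := Finset.mem_image.mp hb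
      have haz : ∀ i, N ≤ i → a i = 0 := hsupp f a ha hfN
      have hbz' : ∀ i, N ≤ i → b' i = 0 := hsupp g b' hb' hgN
      have hbsmall : ∀ i, i < N → Finsupp.mapDomain (⇑σ) b' i = 0 := by
        intro i hi
        rw [show (⇑σ) = flipFun N from rfl, Finsupp.mapDomain, Finsupp.sum_apply, Finsupp.sum]
        apply Finset.sum_eq_zero
        intro j hj
        have hjN : j < N := by
          by_contra hcon2
          exact Finsupp.mem_support_iff.mp hj (hbz' j (by omega))
        have : flipFun N j ≠ i := by unfold flipFun; split_ifs <;> omega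
        simp [Finsupp.single_apply, this]
      have ham : a = m := by
        ext i
        rcases lt_or_ge i N with hiN | hiN
        · have h1 : a i + Finsupp.mapDomain (⇑σ) b' i = m i + d₂ i := by
            have := congrArg (fun v => v i) hab
            simpa [hd] using this
          rw [hbsmall i hiN, hd₂small i hiN] at h1
          omega
        · rw [haz i hiN, hmz i hiN]
      apply hne
      have : b' = m' := by
        have h1 : Finsupp.mapDomain (⇑σ) b' = Finsupp.mapDomain (⇑σ) m' := by
          have : a + Finsupp.mapDomain (⇑σ) b' = m + d₂ := hab
          rw [ham, hd₂] at this
          exact add_left_cancel this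
        exact Finsupp.mapDomain_injective σ.injective h1
      rw [ham, this]
    · intro hni
      exfalso
      exact hni (Finset.HasAntidiagonal.mem_antidiagonal.mpr rfl)
  have hne0 : coeff d (f * rename (⇑σ) g) ≠ 0 := by
    rw [hcoeff]
    exact mul_ne_zero (mem_support_iff.mp hm) (mem_support_iff.mp hm')
  obtain ⟨i, hi⟩ := hmem d (mem_support_iff.mpr hne0)
  -- but every exponent of d is at most s
  have : d i ≤ s := by
    rw [hd]
    rcases lt_or_ge i N with hiN | hiN
    · have := hd₂small i hiN
      have h2 := hmle i
      simp only [Finsupp.add_apply]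
      omega
    · rcases lt_or_ge i (2 * N) with hi2 | hi2
      · have := hd₂val i hiN hi2
        have h2 := hmle' (i - N)
        have h3 := hmz i hiN
        simp only [Finsupp.add_apply]
        omega
      · have := hd₂big i hi2
        have h3 := hmz i (by omega)
        simp only [Finsupp.add_apply]
        omega
  omega
end

section
/- With R = k[x_1, x_2, ...] and 𝔥_s the ideal generated by all x_i^{s+1}: any 𝔖-prime ideal 𝔭 of R containing 𝔥_s equals 𝔥_r for some 0 ≤ r ≤ s. -/
open MvPolynomial

/-- An ideal of `k[x_1, x_2, …]` is `𝔖`-stable if it is stable under all finitely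
supported permutations of the variables. -/
def SStable (k : Type) [Field k] (I : Ideal (MvPolynomial ℕ k)) : Prop :=
  ∀ σ : Equiv.Perm ℕ, {n : ℕ | σ n ≠ n}.Finite → ∀ f ∈ I, rename (⇑σ) f ∈ I

/-- An `𝔖`-stable ideal `𝔭` is `𝔖`-prime if it is proper and whenever `f·σ(g) ∈ 𝔭` for
all `σ ∈ 𝔖`, either `f ∈ 𝔭` or `g ∈ 𝔭`. -/
def SPrime (k : Type) [Field k] (I : Ideal (MvPolynomial ℕ k)) : Prop :=
  I ≠ ⊤ ∧ SStable k I ∧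
    ∀ f g : MvPolynomial ℕ k,
      (∀ σ : Equiv.Perm ℕ, {n : ℕ | σ n ≠ n}.Finite → f * rename (⇑σ) g ∈ I) →
      f ∈ I ∨ g ∈ I

set_option linter.unusedSectionVars false

namespace SPP
variable {k : Type} [Field k]

variable {k : Type} [Field k]

lemma swap_finite (a b : ℕ) : {n : ℕ | Equiv.swap a b n ≠ n}.Finite := by
  apply Set.Finite.subset (Set.toFinite {a, b})
  intro n hn
  by_contra hc
  simp only [Set.mem_insert_iff, Set.mem_singleton_iff] at hc
  push_neg at hc
  exact hn (Equiv.swap_apply_of_ne_of_ne hc.1 hc.2)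

lemma trans_swap_finite (σ : Equiv.Perm ℕ) (hσ : {n : ℕ | σ n ≠ n}.Finite) (a b : ℕ) :
    {n : ℕ | (σ.trans (Equiv.swap a b)) n ≠ n}.Finite := by
  apply Set.Finite.subset (hσ.union (Set.toFinite {σ.symm a, σ.symm b}))
  intro n hn
  by_contra hc
  simp only [Set.mem_union, Set.mem_setOf_eq, Set.mem_insert_iff, Set.mem_singleton_iff] at hc
  push_neg at hc
  obtain ⟨h1, h2, h3⟩ := hc
  have h4 : σ.symm n = n := (Equiv.symm_apply_eq σ).mpr h1.symm
  apply hn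
  simp only [Equiv.trans_apply, h1]
  apply Equiv.swap_apply_of_ne_of_ne
  · intro h; subst h; exact h2 h4.symm
  · intro h; subst h; exact h3 h4.symm

lemma rename_congr_vars {f g : ℕ → ℕ} {q : MvPolynomial ℕ k} (h : ∀ i ∈ q.vars, f i = g i) :
    rename f q = rename g q := by
  conv_lhs => rw [q.as_sum]
  conv_rhs => rw [q.as_sum]
  rw [map_sum, map_sum]
  refine Finset.sum_congr rfl fun m hm => ?_
  rw [rename_monomial, rename_monomial,
    Finsupp.mapDomain_congr (fun i hi => h i ((mem_vars i).mpr ⟨m, hm, hi⟩))]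

/-- The ideal of polynomials all of whose monomials have some exponent `≥ r+1`. -/
def hIdeal' (k : Type) [Field k] (r : ℕ) : Ideal (MvPolynomial ℕ k) where
  carrier := {f : MvPolynomial ℕ k | ∀ m ∈ f.support, ∃ i, r + 1 ≤ m i}
  add_mem' := by
    intro a b ha hb m hm
    classical
    have := Finsupp.support_add hm
    rw [Finset.mem_union] at this
    rcases this with h | h
    exacts [ha m h, hb m h]
  zero_mem' := by simp
  smul_mem' := by
    intro c x hx m hm
    classical
    rw [smul_eq_mul] at hm
    have := support_mul c x hm
    rw [Finset.mem_add] at this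
    obtain ⟨a, ha, b, hb, rfl⟩ := this
    obtain ⟨i, hi⟩ := hx b hb
    exact ⟨i, le_trans hi (by simp)⟩

lemma hIdeal_eq (r : ℕ) : hIdeal k r = hIdeal' k r := by
  classical
  apply le_antisymm
  · refine Ideal.span_le.mpr ?_
    rintro _ ⟨i, rfl⟩
    intro m hm
    rw [support_X_pow] at hm
    simp only [Finset.mem_singleton] at hm
    exact ⟨i, by simp [hm]⟩
  · intro f hf
    have big : (∑ m ∈ f.support, monomial m (coeff m f)) ∈ hIdeal k r := by
      apply Ideal.sum_mem
      intro m hm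
      obtain ⟨i, hi⟩ := hf m hm
      have key : monomial m (coeff m f) =
        X (R := k) i ^ (r + 1) * monomial (m - Finsupp.single i (r + 1)) (coeff m f) := by
        rw [X_pow_eq_monomial, monomial_mul, one_mul]
        congr 1
        rw [← Finsupp.single_le_iff] at hi
        rw [add_tsub_cancel_of_le hi]
      rw [key]
      exact Ideal.mul_mem_right _ _ (Ideal.subset_span ⟨i, rfl⟩)
    rwa [← f.as_sum] at big

lemma mem_hIdeal_iff {r : ℕ} {f : MvPolynomial ℕ k} :
    f ∈ hIdeal k r ↔ ∀ m ∈ f.support, ∃ i, r + 1 ≤ m i := by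
  rw [hIdeal_eq]; rfl

lemma coeff_sum_monomial (T : Finset (ℕ →₀ ℕ)) (c : (ℕ →₀ ℕ) → k) (m : ℕ →₀ ℕ) :
    coeff m (∑ m' ∈ T, monomial m' (c m')) = if m ∈ T then c m else 0 := by
  classical
  rw [coeff_sum]
  simp only [coeff_monomial]
  rw [Finset.sum_ite_eq' T m c]

section
variable {p : Ideal (MvPolynomial ℕ k)} {r : ℕ} (hp : SPrime k p)
  (hr : (X 0 : MvPolynomial ℕ k) ^ (r + 1) ∈ p)
  (hmin : ∀ t ≤ r, (X 0 : MvPolynomial ℕ k) ^ t ∉ p)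

include hp hr

lemma Xpow_mem (i : ℕ) : (X i : MvPolynomial ℕ k) ^ (r + 1) ∈ p := by
  have := hp.2.1 (Equiv.swap 0 i) (swap_finite 0 i) _ hr
  rwa [map_pow, rename_X, Equiv.swap_apply_left] at this

include hmin

lemma Xpow_not_mem (i : ℕ) {t : ℕ} (ht : t ≤ r) : (X i : MvPolynomial ℕ k) ^ t ∉ p := by
  intro hmem
  have := hp.2.1 (Equiv.swap i 0) (swap_finite i 0) _ hmem
  rw [map_pow, rename_X, Equiv.swap_apply_left] at this
  exact hmin t ht this

lemma prodD (S : Finset ℕ) : (∏ i ∈ S, (X i : MvPolynomial ℕ k) ^ r) ∉ p := by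
  classical
  induction S using Finset.induction_on with
  | empty =>
    simp only [Finset.prod_empty]
    intro h1
    exact hp.1 (Ideal.eq_top_iff_one p |>.mpr h1)
  | @insert a S ha IH =>
    intro hmem
    rcases Nat.eq_zero_or_pos r with hr0 | hr1
    · subst hr0
      simp only [pow_zero, Finset.prod_const_one] at hmem
      exact hp.1 (Ideal.eq_top_iff_one p |>.mpr hmem)
    have key : ∀ σ : Equiv.Perm ℕ, {n : ℕ | σ n ≠ n}.Finite →
        (X a : MvPolynomial ℕ k) ^ r * rename (⇑σ) (∏ i ∈ S, (X i : MvPolynomial ℕ k) ^ r) ∈ p := by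
      intro σ hσ
      rw [map_prod]
      simp only [map_pow, rename_X]
      by_cases hcase : ∃ i0 ∈ S, σ i0 = a
      · obtain ⟨i0, hi0, hia⟩ := hcase
        rw [← Finset.mul_prod_erase S _ hi0, hia, ← mul_assoc, ← pow_add,
          show r + r = (r + 1) + (r - 1) by omega, pow_add, mul_assoc]
        exact Ideal.mul_mem_right _ _ (Xpow_mem hp hr a)
      · push_neg at hcase
        set τ := σ.trans (Equiv.swap (σ a) a) with hτ
        have hτf := trans_swap_finite σ hσ (σ a) a
        have hmem2 := hp.2.1 τ hτf _ hmem
        rw [map_prod] at hmem2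
        simp only [map_pow, rename_X] at hmem2
        rw [Finset.prod_insert ha] at hmem2
        have hτa : τ a = a := by simp [hτ, Equiv.swap_apply_left]
        have hτi : ∀ i ∈ S, τ i = σ i := by
          intro i hi
          have h1 : σ i ≠ σ a := fun h => ha (σ.injective h ▸ hi)
          exact Equiv.swap_apply_of_ne_of_ne h1 (hcase i hi)
        rw [hτa, Finset.prod_congr rfl (fun i hi => by rw [hτi i hi])] at hmem2
        exact hmem2
    rcases hp.2.2 _ _ key with h | h
    · exact Xpow_not_mem hp hr hmin a le_rfl h
    · exact IH h

lemma lemE {g : MvPolynomial ℕ k} {i : ℕ} (hi : i ∉ g.vars)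
    (hg : (X i : MvPolynomial ℕ k) ^ r * g ∈ p) : g ∈ p := by
  classical
  set S := Finset.range (g.vars.card + 1) with hS
  refine (hp.2.2 (∏ t ∈ S, (X t : MvPolynomial ℕ k) ^ r) g ?_).resolve_left
    (prodD hp hr hmin S)
  intro σ hσ
  have hcard : (g.vars.image σ).card < S.card := by
    calc (g.vars.image σ).card ≤ g.vars.card := Finset.card_image_le
    _ < g.vars.card + 1 := Nat.lt_succ_self _
    _ = S.card := by rw [hS, Finset.card_range]
  obtain ⟨j, hjS, hj⟩ : ∃ j ∈ S, j ∉ g.vars.image σ := by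
    by_contra hc
    push_neg at hc
    exact absurd (Finset.card_le_card hc) (not_le.mpr hcard)
  set τ := σ.trans (Equiv.swap (σ i) j) with hτ
  have hτf := trans_swap_finite σ hσ (σ i) j
  have hmem := hp.2.1 τ hτf _ hg
  rw [map_mul, map_pow, rename_X] at hmem
  have hτi : τ i = j := by simp [hτ, Equiv.swap_apply_left]
  have hτg : rename (⇑τ) g = rename (⇑σ) g := by
    apply rename_congr_vars
    intro n hn
    have h1 : σ n ≠ σ i := fun h => hi (σ.injective h ▸ hn)
    have h2 : σ n ≠ j := fun h => hj (Finset.mem_image.mpr ⟨n, hn, h⟩)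
    simp only [hτ, Equiv.trans_apply, Equiv.coe_trans, Function.comp_apply]
    exact Equiv.swap_apply_of_ne_of_ne h1 h2
  rw [hτi, hτg] at hmem
  have heq : (∏ t ∈ S, (X t : MvPolynomial ℕ k) ^ r) * rename (⇑σ) g =
      (∏ t ∈ S.erase j, (X t : MvPolynomial ℕ k) ^ r) * ((X j : MvPolynomial ℕ k) ^ r * rename (⇑σ) g) := by
    rw [← Finset.mul_prod_erase S _ hjS]; ring
  rw [heq]
  exact Ideal.mul_mem_left _ _ hmem

end
section
variable {p : Ideal (MvPolynomial ℕ k)} {r : ℕ} (hp : SPrime k p)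
  (hr : (X 0 : MvPolynomial ℕ k) ^ (r + 1) ∈ p)
  (hmin : ∀ t ≤ r, (X 0 : MvPolynomial ℕ k) ^ t ∉ p)


include hp hr

lemma hIdeal_le : hIdeal k r ≤ p := by
  refine Ideal.span_le.mpr ?_
  rintro _ ⟨i, rfl⟩
  exact Xpow_mem hp hr i

include hmin

omit hr hmin in
lemma const_case {f : MvPolynomial ℕ k} (hf : f ∈ p) (he : f.vars = ∅) : f = 0 := by
  classical
  have hsupp : ∀ m ∈ f.support, m = 0 := by
    intro m hm
    by_contra hm0
    obtain ⟨i, hi⟩ := Finsupp.support_nonempty_iff.mpr hm0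
    exact absurd ((mem_vars i).mpr ⟨m, hm, hi⟩) (by simp [he])
  have hC : f = C (coeff 0 f) := by
    apply MvPolynomial.ext
    intro m
    rw [coeff_C]
    by_cases h0 : (0 : ℕ →₀ ℕ) = m
    · rw [if_pos h0, ← h0]
    · rw [if_neg h0]
      by_contra hc
      exact h0 ((hsupp m (mem_support_iff.mpr hc)).symm)
  by_contra hf0
  have hc0 : coeff 0 f ≠ 0 := fun h => hf0 (by rw [hC, h, map_zero])
  have h1 : (1 : MvPolynomial ℕ k) ∈ p := by
    have := Ideal.mul_mem_left p (C (coeff 0 f)⁻¹) (hC ▸ hf)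
    rwa [← C_mul, inv_mul_cancel₀ hc0, C_1] at this
  exact hp.1 (Ideal.eq_top_iff_one p |>.mpr h1)

lemma main (n : ℕ) : ∀ f ∈ p, (∀ m ∈ f.support, ∀ i, m i ≤ r) → f.vars.card ≤ n → f = 0 := by
  classical
  induction n with
  | zero =>
    intro f hf hlow hcard
    exact const_case hp hf (Finset.card_eq_zero.mp (Nat.le_zero.mp hcard))
  | succ n IH =>
    intro f hf hlow hcard
    by_contra hf0
    rcases Finset.eq_empty_or_nonempty f.vars with he | ⟨i, hif⟩
    · exact hf0 (const_case hp hf he)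
    have inner : ∀ t : ℕ, ∀ h : MvPolynomial ℕ k, h ∈ p → h ≠ 0 →
        (∀ m ∈ h.support, ∀ j, m j ≤ r) → h.vars ⊆ f.vars →
        (h.support.image (fun m => m i)).card ≤ t → False := by
      intro t
      induction t with
      | zero =>
        intro h _ h0 _ _ hcard0
        rw [Nat.le_zero, Finset.card_eq_zero, Finset.image_eq_empty,
          support_eq_empty] at hcard0
        exact h0 hcard0
      | succ t IHt =>
        intro h hh h0 hlowh hvars hlayers
        set d : ℕ := h.support.sup (fun m => m i) with hd
        have hsne : h.support.Nonempty := support_nonempty.mpr h0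
        have hdr : d ≤ r := Finset.sup_le fun m hm => hlowh m hm i
        obtain ⟨m0, hm0, hm0d⟩ := Finset.exists_mem_eq_sup h.support hsne (fun m => m i)
        set B : MvPolynomial ℕ k :=
          ∑ m ∈ h.support.filter (fun m => m i < d), monomial m (coeff m h) with hB
        have hcoeffB : ∀ m, coeff m B =
            if m ∈ h.support.filter (fun m => m i < d) then coeff m h else 0 := by
          intro m; rw [hB, coeff_sum_monomial]
        by_cases hB0 : B = 0
        · -- all monomials have m i = d
          have hall : ∀ m ∈ h.support, m i = d := by
            intro m hm
            rcases lt_or_eq_of_le (Finset.le_sup (f := fun m => m i) hm) with hlt | heq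
            · exfalso
              have := hcoeffB m
              rw [hB0, if_pos (Finset.mem_filter.mpr ⟨hm, hlt⟩)] at this
              exact mem_support_iff.mp hm this.symm
            · exact heq
          set q : MvPolynomial ℕ k :=
            ∑ m ∈ h.support, monomial (m - Finsupp.single i d) (coeff m h) with hq
          have key : (X i : MvPolynomial ℕ k) ^ d * q = h := by
            rw [hq, Finset.mul_sum]
            conv_rhs => rw [h.as_sum]
            refine Finset.sum_congr rfl fun m hm => ?_
            rw [X_pow_eq_monomial, monomial_mul, one_mul]
            congr 1
            rw [add_tsub_cancel_of_le (Finsupp.single_le_iff.mpr (le_of_eq (hall m hm).symm))]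
          have hq0 : q ≠ 0 := fun hqz => h0 (by rw [← key, hqz, mul_zero])
          have hsupp_q : ∀ m' ∈ q.support, ∃ m ∈ h.support, m' = m - Finsupp.single i d := by
            intro m' hm'
            have hc := mem_support_iff.mp hm'
            rw [hq, coeff_sum] at hc
            obtain ⟨m, hm, hne⟩ := Finset.exists_ne_zero_of_sum_ne_zero hc
            rw [coeff_monomial] at hne
            by_cases he : m - Finsupp.single i d = m'
            · exact ⟨m, hm, he.symm⟩
            · exact absurd rfl (by rwa [if_neg he] at hne)
          have hqvars : ∀ j ∈ q.vars, j ∈ f.vars.erase i := by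
            intro j hj
            obtain ⟨m', hm', hjm'⟩ := (mem_vars j).mp hj
            obtain ⟨m, hm, rfl⟩ := hsupp_q m' hm'
            have hmj := Finsupp.mem_support_iff.mp hjm'
            rw [Finsupp.tsub_apply] at hmj
            have hji : j ≠ i := by
              intro hji; subst hji
              rw [Finsupp.single_eq_same, hall m hm, Nat.sub_self] at hmj
              exact hmj rfl
            rw [Finsupp.single_eq_of_ne' (Ne.symm hji), Nat.sub_zero] at hmj
            refine Finset.mem_erase.mpr ⟨hji, hvars ?_⟩
            exact (mem_vars j).mpr ⟨m, hm, Finsupp.mem_support_iff.mpr hmj⟩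
          have hqp : q ∈ p := by
            apply lemE hp hr hmin (i := i)
            · intro hiq
              exact absurd (Finset.mem_erase.mp (hqvars i hiq)).1 (by simp)
            · have step := Ideal.mul_mem_left p ((X i : MvPolynomial ℕ k) ^ (r - d)) hh
              rwa [← key, ← mul_assoc, ← pow_add, Nat.sub_add_cancel hdr] at step
          have hqlow : ∀ m' ∈ q.support, ∀ j, m' j ≤ r := by
            intro m' hm' j
            obtain ⟨m, hm, rfl⟩ := hsupp_q m' hm'
            rw [Finsupp.tsub_apply]
            exact le_trans (Nat.sub_le _ _) (hlowh m hm j)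
          have hqcard : q.vars.card ≤ n := by
            have h1 : q.vars ⊆ f.vars.erase i := fun j hj => hqvars j hj
            have h2 := Finset.card_le_card h1
            have h3 := Finset.card_erase_of_mem hif
            omega
          exact hq0 (IH q hqp hqlow hqcard)
        · -- B ≠ 0 : eliminate the top layer
          have hsuppB : ∀ m ∈ B.support, m ∈ h.support ∧ m i < d := by
            intro m hm
            have hc := mem_support_iff.mp hm
            rw [hcoeffB] at hc
            by_cases hmem : m ∈ h.support.filter (fun m => m i < d)
            · exact Finset.mem_filter.mp hmem
            · exact absurd rfl (by rwa [if_neg hmem] at hc)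
          set c : ℕ := r - d + 1 with hc
          set h' : MvPolynomial ℕ k := (X i : MvPolynomial ℕ k) ^ c * B with hh'
          -- h - B has all monomials with exponent d at i
          have hsubsupp : ∀ m ∈ (h - B).support, m i = d := by
            intro m hm
            have hcne := mem_support_iff.mp hm
            rw [coeff_sub, hcoeffB] at hcne
            by_cases hmem : m ∈ h.support.filter (fun m => m i < d)
            · rw [if_pos hmem, sub_self] at hcne; exact absurd rfl hcne
            · rw [if_neg hmem, sub_zero] at hcne
              have hmh : m ∈ h.support := mem_support_iff.mpr hcne
              have h4 : ¬ m i < d := fun hlt => hmem (Finset.mem_filter.mpr ⟨hmh, hlt⟩)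
              have h5 : m i ≤ d := by
                rw [hd]; exact Finset.le_sup (f := fun m => m i) hmh
              omega
          have hhBmem : (X i : MvPolynomial ℕ k) ^ c * (h - B) ∈ hIdeal k r := by
            rw [mem_hIdeal_iff]
            intro m'' hm''
            have := support_mul ((X i : MvPolynomial ℕ k) ^ c) (h - B) hm''
            rw [Finset.mem_add] at this
            obtain ⟨a, ha, b, hb, rfl⟩ := this
            rw [support_X_pow, Finset.mem_singleton] at ha
            subst ha
            refine ⟨i, ?_⟩
            have := hsubsupp b hb
            simp only [Finsupp.coe_add, Pi.add_apply, Finsupp.single_eq_same]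
            omega
          have hh'p : h' ∈ p := by
            have e1 : h' = (X i : MvPolynomial ℕ k) ^ c * h -
                (X i : MvPolynomial ℕ k) ^ c * (h - B) := by rw [hh', mul_sub]; ring
            rw [e1]
            exact Ideal.sub_mem p (Ideal.mul_mem_left p _ hh) (hIdeal_le hp hr hhBmem)
          have hh'0 : h' ≠ 0 :=
            mul_ne_zero (pow_ne_zero _ (X_ne_zero i)) hB0
          have hsupph' : ∀ m'' ∈ h'.support, ∃ m ∈ B.support, m'' = Finsupp.single i c + m := by
            intro m'' hm''
            have := support_mul ((X i : MvPolynomial ℕ k) ^ c) B hm''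
            rw [Finset.mem_add] at this
            obtain ⟨a, ha, b, hb, rfl⟩ := this
            rw [support_X_pow, Finset.mem_singleton] at ha
            subst ha
            exact ⟨b, hb, rfl⟩
          have hh'low : ∀ m'' ∈ h'.support, ∀ j, m'' j ≤ r := by
            intro m'' hm'' j
            obtain ⟨m, hm, rfl⟩ := hsupph' m'' hm''
            obtain ⟨hmh, hmid⟩ := hsuppB m hm
            simp only [Finsupp.coe_add, Pi.add_apply]
            by_cases hji : j = i
            · subst hji
              rw [Finsupp.single_eq_same]
              omega
            · rw [Finsupp.single_eq_of_ne' (Ne.symm hji), zero_add]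
              exact hlowh m hmh j
          have hh'vars : h'.vars ⊆ f.vars := by
            intro j hj
            obtain ⟨m'', hm'', hjm''⟩ := (mem_vars j).mp hj
            obtain ⟨m, hm, rfl⟩ := hsupph' m'' hm''
            obtain ⟨hmh, _⟩ := hsuppB m hm
            have hne := Finsupp.mem_support_iff.mp hjm''
            simp only [Finsupp.coe_add, Pi.add_apply] at hne
            by_cases hji : j = i
            · subst hji; exact hif
            · rw [Finsupp.single_eq_of_ne' (Ne.symm hji), zero_add] at hne
              exact hvars ((mem_vars j).mpr ⟨m, hmh, Finsupp.mem_support_iff.mpr hne⟩)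
          have hh'layers : (h'.support.image (fun m => m i)).card ≤ t := by
            have hsub1 : h'.support.image (fun m => m i) ⊆
                (B.support.image (fun m => m i)).image (fun x => c + x) := by
              intro x hx
              obtain ⟨m'', hm'', rfl⟩ := Finset.mem_image.mp hx
              obtain ⟨m, hm, rfl⟩ := hsupph' m'' hm''
              refine Finset.mem_image.mpr ⟨m i, Finset.mem_image.mpr ⟨m, hm, rfl⟩, ?_⟩
              simp [Finsupp.single_eq_same]
            have hsub2 : B.support.image (fun m => m i) ⊆
                (h.support.image (fun m => m i)).erase d := by
              intro x hx
              obtain ⟨m, hm, rfl⟩ := Finset.mem_image.mp hx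
              obtain ⟨hmh, hmid⟩ := hsuppB m hm
              exact Finset.mem_erase.mpr ⟨Nat.ne_of_lt hmid, Finset.mem_image.mpr ⟨m, hmh, rfl⟩⟩
            have hd_mem : d ∈ h.support.image (fun m => m i) :=
              Finset.mem_image.mpr ⟨m0, hm0, hm0d.symm⟩
            calc (h'.support.image (fun m => m i)).card
                ≤ ((B.support.image (fun m => m i)).image (fun x => c + x)).card :=
                  Finset.card_le_card hsub1
              _ ≤ (B.support.image (fun m => m i)).card := Finset.card_image_le
              _ ≤ ((h.support.image (fun m => m i)).erase d).card := Finset.card_le_card hsub2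
              _ = (h.support.image (fun m => m i)).card - 1 := Finset.card_erase_of_mem hd_mem
              _ ≤ t := by
                  have := Finset.card_pos.mpr ⟨d, hd_mem⟩
                  omega
          exact IHt h' hh'p hh'0 hh'low hh'vars hh'layers
    exact inner _ f hf hf0 hlow (fun j hj => hj) le_rfl

end

end SPP

open SPP in
/-- Any `𝔖`-prime ideal of `R = k[x_1, x_2, …]` containing `𝔥_s` equals `𝔥_r` for some
`0 ≤ r ≤ s`. -/
theorem sPrime_containing_h (k : Type) [Field k] (s : ℕ) (p : Ideal (MvPolynomial ℕ k))
    (hp : SPrime k p) (hle : hIdeal k s ≤ p) :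
    ∃ r : ℕ, r ≤ s ∧ p = hIdeal k r := by
  classical
  have hw : (X 0 : MvPolynomial ℕ k) ^ (s + 1) ∈ p :=
    hle (Ideal.subset_span ⟨0, rfl⟩)
  have hex : ∃ e, (X 0 : MvPolynomial ℕ k) ^ e ∈ p := ⟨s + 1, hw⟩
  have he : (X 0 : MvPolynomial ℕ k) ^ Nat.find hex ∈ p := Nat.find_spec hex
  have hes : Nat.find hex ≤ s + 1 := Nat.find_le hw
  have he1 : 1 ≤ Nat.find hex := by
    rcases Nat.eq_zero_or_pos (Nat.find hex) with h0 | h1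
    · exfalso
      rw [h0, pow_zero] at he
      exact hp.1 (Ideal.eq_top_iff_one p |>.mpr he)
    · exact h1
  set r : ℕ := Nat.find hex - 1 with hrdef
  have hr : (X 0 : MvPolynomial ℕ k) ^ (r + 1) ∈ p := by
    rw [hrdef, Nat.sub_add_cancel he1]; exact he
  have hmin : ∀ t ≤ r, (X 0 : MvPolynomial ℕ k) ^ t ∉ p := by
    intro t ht hmem
    exact Nat.find_min hex (by omega) hmem
  refine ⟨r, by omega, ?_⟩
  apply le_antisymm
  · intro f hf
    set g : MvPolynomial ℕ k :=
      ∑ m ∈ f.support.filter (fun m => ∀ j ∈ m.support, m j ≤ r), monomial m (coeff m f)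
      with hgdef
    have hcg : ∀ m, coeff m g =
        if m ∈ f.support.filter (fun m => ∀ j ∈ m.support, m j ≤ r) then coeff m f else 0 := by
      intro m; rw [hgdef, coeff_sum_monomial]
    have hfg : f - g ∈ hIdeal k r := by
      rw [mem_hIdeal_iff]
      intro m hm
      have hcne := mem_support_iff.mp hm
      rw [coeff_sub, hcg] at hcne
      by_cases hmem : m ∈ f.support.filter (fun m => ∀ j ∈ m.support, m j ≤ r)
      · rw [if_pos hmem, sub_self] at hcne; exact absurd rfl hcne
      · rw [if_neg hmem, sub_zero] at hcne
        have hmf : m ∈ f.support := mem_support_iff.mpr hcne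
        have : ¬ ∀ j ∈ m.support, m j ≤ r := fun hall =>
          hmem (Finset.mem_filter.mpr ⟨hmf, hall⟩)
        push_neg at this
        obtain ⟨j, _, hj⟩ := this
        exact ⟨j, by omega⟩
    have hgp : g ∈ p := by
      have := Ideal.sub_mem p hf (hIdeal_le hp hr hfg)
      rwa [sub_sub_cancel] at this
    have hglow : ∀ m ∈ g.support, ∀ j, m j ≤ r := by
      intro m hm j
      have hcne := mem_support_iff.mp hm
      rw [hcg] at hcne
      by_cases hmem : m ∈ f.support.filter (fun m => ∀ j ∈ m.support, m j ≤ r)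
      · have hall := (Finset.mem_filter.mp hmem).2
        by_cases hjs : j ∈ m.support
        · exact hall j hjs
        · simp [Finsupp.notMem_support_iff.mp hjs]
      · exact absurd rfl (by rwa [if_neg hmem] at hcne)
    have hg0 : g = 0 := main hp hr hmin g.vars.card g hgp hglow le_rfl
    have : f = f - g := by rw [hg0, sub_zero]
    rw [this]
    exact hfg
  · exact hIdeal_le hp hr
end

section
/- Let 𝔖 be the infinite symmetric group acting on {1,2,...}, and let 𝕍_n be the span inside (⊕_{i≥1} k e_i)^{⊗n} of the tensors e_{i_1}⊗···⊗e_{i_n} with i_1,...,i_n distinct. Then for any smooth representation V of 𝔖, evaluation at e_{1,...,n} gives a bijection Hom_𝔖(𝕍_n, V) → V^{𝔖(n)}, where 𝔖(n) is the subgroup fixing 1,...,n pointwise. -/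
def FS : Subgroup (Equiv.Perm ℕ) where
  carrier := {σ : Equiv.Perm ℕ | {n : ℕ | σ n ≠ n}.Finite}
  one_mem' := by simp
  mul_mem' := by
    intro a b ha hb
    apply Set.Finite.subset (ha.union hb)
    intro n hn
    simp only [Set.mem_union, Set.mem_setOf_eq]
    by_contra h
    push_neg at h
    exact hn (by simp [Equiv.Perm.mul_apply, h.2, h.1])
  inv_mem' := by
    intro a ha
    show {n : ℕ | a⁻¹ n ≠ n}.Finite
    have : {n : ℕ | a⁻¹ n ≠ n} = {n : ℕ | a n ≠ n} := by
      ext n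
      simp only [Set.mem_setOf_eq, ne_eq]
      constructor
      · intro h he
        apply h
        calc a⁻¹ n = a⁻¹ (a n) := by rw [he]
        _ = n := by first | simp | exact a.symm_apply_apply n
      · intro h he
        apply h
        calc a n = a (a⁻¹ n) := by rw [he]
        _ = n := by first | simp | exact a.apply_symm_apply n
    rw [this]; exact ha

/-- The representation `𝕍_n`: free `k`-module on the set of tuples of distinct natural
numbers, i.e. on injections `Fin n ↪ ℕ`. -/
abbrev VV (k : Type) [Field k] (n : ℕ) := (Fin n ↪ ℕ) →₀ k

/-- Action of a permutation on an injective tuple. -/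
def embAct (n : ℕ) (σ : Equiv.Perm ℕ) (f : Fin n ↪ ℕ) : Fin n ↪ ℕ :=
  f.trans σ.toEmbedding

/-- The representation of the infinite symmetric group on `𝕍_n`. -/
noncomputable def rhoV (k : Type) [Field k] (n : ℕ) : Representation k FS (VV k n) where
  toFun σ := Finsupp.lmapDomain k k (embAct n (σ : Equiv.Perm ℕ))
  map_one' := by
    show Finsupp.lmapDomain k k (embAct n ((1 : FS) : Equiv.Perm ℕ)) = 1
    have h : embAct n ((1 : FS) : Equiv.Perm ℕ) = id := by
      funext f
      ext i
      rfl
    rw [h, Finsupp.lmapDomain_id]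
    rfl
  map_mul' := by
    intro σ τ
    show Finsupp.lmapDomain k k (embAct n ((σ * τ : FS) : Equiv.Perm ℕ)) = _
    have h : embAct n ((σ * τ : FS) : Equiv.Perm ℕ) =
        embAct n (σ : Equiv.Perm ℕ) ∘ embAct n (τ : Equiv.Perm ℕ) := by
      funext f
      ext i
      rfl
    rw [h, Finsupp.lmapDomain_comp]
    rfl

/-- The standard basis vector `e_{1,…,n}` of `𝕍_n`. -/
noncomputable def estd (k : Type) [Field k] (n : ℕ) : VV k n :=
  Finsupp.single ⟨Fin.val, Fin.val_injective⟩ 1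

/-- A representation of `𝔖` is smooth if every vector is fixed by some `𝔖(n)`. -/
def SmoothRep {k : Type} [Field k] {V : Type} [AddCommGroup V] [Module k V]
    (rho : Representation k FS V) : Prop :=
  ∀ v : V, ∃ n : ℕ, ∀ σ : FS, (∀ i < n, (σ : Equiv.Perm ℕ) i = i) → rho σ v = v

lemma exists_perm_comp {α β : Type} [Fintype α] [Fintype β] (e₁ e₂ : α ↪ β) :
    ∃ π : Equiv.Perm β, ∀ a, π (e₁ a) = e₂ a := by
  classical
  have h1 : Fintype.card (Set.range e₁) = Fintype.card (Set.range e₂) := by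
    rw [Set.card_range_of_injective e₁.injective, Set.card_range_of_injective e₂.injective]
  have h2 : Fintype.card {x // ¬ x ∈ Set.range e₁} = Fintype.card {x // ¬ x ∈ Set.range e₂} := by
    have h1' : Fintype.card {x // x ∈ Set.range e₁} = Fintype.card {x // x ∈ Set.range e₂} := h1
    rw [Fintype.card_subtype_compl, Fintype.card_subtype_compl, h1']
  let E : (Set.range e₁ : Set β) ≃ (Set.range e₂ : Set β) :=
    (Equiv.ofInjective e₁ e₁.injective).symm.trans (Equiv.ofInjective e₂ e₂.injective)
  let F : {x // ¬ x ∈ Set.range e₁} ≃ {x // ¬ x ∈ Set.range e₂} := Fintype.equivOfCardEq h2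
  refine ⟨Equiv.subtypeCongr E F, fun a => ?_⟩
  have hmem : e₁ a ∈ Set.range e₁ := Set.mem_range_self a
  simp only [Equiv.subtypeCongr, Equiv.trans_apply, Equiv.sumCompl_symm_apply_of_pos hmem,
    Equiv.sumCongr_apply, Sum.map_inl, Equiv.sumCompl_apply_inl]
  show ((E ⟨e₁ a, hmem⟩ : Set.range e₂) : β) = e₂ a
  have h3 : (⟨e₁ a, hmem⟩ : Set.range e₁) = Equiv.ofInjective e₁ e₁.injective a :=
    Subtype.ext rfl
  rw [h3]
  simp [E]

lemma exists_FS_agree (n : ℕ) (g : Fin n ↪ ℕ) :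
    ∃ σ : FS, ∀ i : Fin n, (σ : Equiv.Perm ℕ) (i : ℕ) = g i := by
  classical
  obtain ⟨N, hnN, hgN⟩ : ∃ N, n ≤ N ∧ ∀ i : Fin n, g i < N := by
    refine ⟨n + (Finset.univ.sup fun i : Fin n => g i) + 1, by omega, fun i => ?_⟩
    have h : g i ≤ Finset.univ.sup fun i : Fin n => g i :=
      Finset.le_sup (f := fun i : Fin n => g i) (Finset.mem_univ i)
    omega
  let e₁ : Fin n ↪ Fin N := Fin.castLEEmb hnN
  let e₂ : Fin n ↪ Fin N := ⟨fun i => ⟨g i, hgN i⟩, fun i j h => g.injective (by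
    simpa [Fin.mk.injEq] using h)⟩
  obtain ⟨π, hπ⟩ := exists_perm_comp e₁ e₂
  let σ : Equiv.Perm ℕ := π.extendDomain Fin.equivSubtype
  have hσmem : σ ∈ FS := by
    show {m : ℕ | σ m ≠ m}.Finite
    apply (Set.finite_Iio N).subset
    intro m hm
    by_contra h
    exact hm (π.extendDomain_apply_not_subtype Fin.equivSubtype (by simpa using h))
  refine ⟨⟨σ, hσmem⟩, fun i => ?_⟩
  have hi : (i : ℕ) < N := lt_of_lt_of_le i.isLt hnN
  have : σ (i : ℕ) = ((π (Fin.equivSubtype.symm ⟨(i : ℕ), hi⟩) : Fin N) : ℕ) := by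
    rw [π.extendDomain_apply_subtype Fin.equivSubtype hi]; rfl
  rw [this]
  have : Fin.equivSubtype.symm ⟨(i : ℕ), hi⟩ = e₁ i := rfl
  rw [this, hπ]
  rfl

/-- The standard embedding. -/
def stdEmb (n : ℕ) : Fin n ↪ ℕ := ⟨Fin.val, Fin.val_injective⟩

/-- A choice of finitary permutation agreeing with `g` on `Fin n`. -/
noncomputable def sig (n : ℕ) (g : Fin n ↪ ℕ) : FS := (exists_FS_agree n g).choose

lemma sig_spec (n : ℕ) (g : Fin n ↪ ℕ) (i : Fin n) :
    ((sig n g : FS) : Equiv.Perm ℕ) (i : ℕ) = g i := (exists_FS_agree n g).choose_spec i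

section key
variable {k : Type} [Field k] {V : Type} [AddCommGroup V] [Module k V]
  (rho : Representation k FS V) {n : ℕ} {v : V}

lemma rho_agree_eq (hv : ∀ σ : FS, (∀ i < n, (σ : Equiv.Perm ℕ) i = i) → rho σ v = v)
    {σ τ : FS} (g : Fin n ↪ ℕ)
    (hσ : ∀ i : Fin n, (σ : Equiv.Perm ℕ) (i : ℕ) = g i)
    (hτ : ∀ i : Fin n, (τ : Equiv.Perm ℕ) (i : ℕ) = g i) :
    rho σ v = rho τ v := by
  have hfix : ∀ i < n, ((τ⁻¹ * σ : FS) : Equiv.Perm ℕ) i = i := by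
    intro i hi
    have h1 : (σ : Equiv.Perm ℕ) i = g ⟨i, hi⟩ := hσ ⟨i, hi⟩
    have h2 : (τ : Equiv.Perm ℕ) i = g ⟨i, hi⟩ := hτ ⟨i, hi⟩
    show (τ : Equiv.Perm ℕ)⁻¹ ((σ : Equiv.Perm ℕ) i) = i
    rw [h1, ← h2, Equiv.Perm.inv_def, Equiv.symm_apply_apply]
  calc rho σ v = rho (τ * (τ⁻¹ * σ)) v := by rw [mul_inv_cancel_left]
  _ = rho τ (rho (τ⁻¹ * σ) v) := by rw [map_mul]; rfl
  _ = rho τ v := by rw [hv _ hfix]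

end key

/-- For a smooth representation `V` of the infinite symmetric group, evaluation at
`e_{1,…,n}` is a bijection from `Hom_𝔖(𝕍_n, V)` onto the `𝔖(n)`-invariants of `V`:
every equivariant map sends `e_{1,…,n}` to an `𝔖(n)`-invariant vector, and every
`𝔖(n)`-invariant vector arises from a unique equivariant map. -/
theorem mapping_property_Vn (k : Type) [Field k] (V : Type) [AddCommGroup V] [Module k V]
    (rho : Representation k FS V) (hsm : SmoothRep rho) (n : ℕ) :
    (∀ f : VV k n →ₗ[k] V, (∀ (σ : FS) (x : VV k n), f (rhoV k n σ x) = rho σ (f x)) →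
      ∀ σ : FS, (∀ i < n, (σ : Equiv.Perm ℕ) i = i) → rho σ (f (estd k n)) = f (estd k n)) ∧
    (∀ v : V, (∀ σ : FS, (∀ i < n, (σ : Equiv.Perm ℕ) i = i) → rho σ v = v) →
      ∃! f : VV k n →ₗ[k] V,
        (∀ (σ : FS) (x : VV k n), f (rhoV k n σ x) = rho σ (f x)) ∧ f (estd k n) = v) := by
  classical
  have embAct_std : ∀ σ : FS, (∀ i < n, (σ : Equiv.Perm ℕ) i = i) →
      embAct n (σ : Equiv.Perm ℕ) (stdEmb n) = stdEmb n := by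
    intro σ hσ
    ext i
    exact hσ i i.isLt
  have rhoV_single : ∀ (σ : FS) (g : Fin n ↪ ℕ),
      rhoV k n σ (Finsupp.single g (1 : k)) =
        Finsupp.single (embAct n (σ : Equiv.Perm ℕ) g) (1 : k) := by
    intro σ g
    show Finsupp.mapDomain _ _ = _
    rw [Finsupp.mapDomain_single]
  constructor
  · intro f hf σ hσ
    rw [← hf σ]
    show f (rhoV k n σ (Finsupp.single (stdEmb n) 1)) = f (Finsupp.single (stdEmb n) 1)
    rw [rhoV_single, embAct_std σ hσ]
  · intro v hv
    set F : (Fin n ↪ ℕ) → V := fun g => rho (sig n g) v with hF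
    set f : VV k n →ₗ[k] V := Finsupp.linearCombination k F with hf
    have fsingle : ∀ g : Fin n ↪ ℕ, f (Finsupp.single g 1) = rho (sig n g) v := by
      intro g
      rw [hf, Finsupp.linearCombination_single, one_smul]
    have hequiv : ∀ (σ : FS) (x : VV k n), f (rhoV k n σ x) = rho σ (f x) := by
      intro σ
      suffices h : f ∘ₗ (rhoV k n σ) = (rho σ : V →ₗ[k] V) ∘ₗ f by
        intro x; exact DFunLike.congr_fun h x
      apply Finsupp.lhom_ext'
      intro g
      apply LinearMap.ext
      intro c
      have hc : (Finsupp.lsingle g : k →ₗ[k] VV k n) c = c • Finsupp.single g 1 := by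
        simp [Finsupp.smul_single]
      simp only [LinearMap.comp_apply, hc, map_smul]
      congr 1
      rw [rhoV_single, fsingle, fsingle]
      have : rho σ (rho (sig n g) v) = rho (σ * sig n g) v := by rw [map_mul]; rfl
      rw [this]
      refine rho_agree_eq rho hv (embAct n (σ : Equiv.Perm ℕ) g) (fun i => sig_spec n _ i)
        (fun i => ?_)
      show (σ : Equiv.Perm ℕ) (((sig n g : FS) : Equiv.Perm ℕ) (i : ℕ)) = _
      rw [sig_spec n g i]
      rfl
    have hstd : f (estd k n) = v := by
      show f (Finsupp.single (stdEmb n) 1) = v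
      rw [fsingle]
      have : rho (sig n (stdEmb n)) v = rho (1 : FS) v :=
        rho_agree_eq rho hv (stdEmb n) (fun i => sig_spec n _ i) (fun i => rfl)
      rw [this, map_one]
      rfl
    refine ⟨f, ⟨hequiv, hstd⟩, ?_⟩
    rintro f' ⟨hf'equiv, hf'std⟩
    apply Finsupp.lhom_ext'
    intro g
    apply LinearMap.ext
    intro c
    have hc : (Finsupp.lsingle g : k →ₗ[k] VV k n) c = c • Finsupp.single g 1 := by
      simp [Finsupp.smul_single]
    simp only [LinearMap.comp_apply, hc, map_smul]
    congr 1
    have hg : embAct n ((sig n g : FS) : Equiv.Perm ℕ) (stdEmb n) = g := by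
      ext i
      exact sig_spec n g i
    have : Finsupp.single g (1 : k) = rhoV k n (sig n g) (estd k n) := by
      show _ = rhoV k n (sig n g) (Finsupp.single (stdEmb n) 1)
      rw [rhoV_single, hg]
    calc f' (Finsupp.single g 1) = f' (rhoV k n (sig n g) (estd k n)) := by rw [← this]
    _ = rho (sig n g) (f' (estd k n)) := hf'equiv _ _
    _ = rho (sig n g) v := by rw [hf'std]
    _ = f (Finsupp.single g 1) := (fsingle g).symm
end
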